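/- Suppose Assumption (*) holds for the two-sided cell c. Then for every d ∈ D and u ∈ U_d one has C_d T_u ≡ T_{du} mod H_{<0}, and for every d ∈ D one has C_d C_d ≡ h_{d,d,d} C_d mod H_{<c}. -/

import Mathlib

open scoped Classical TensorProduct

noncomputable section

namespace KL

variable (Γ : Type) [AddCommGroup Γ] [LinearOrder Γ] [IsOrderedAddMonoid Γ]

/-- The group ring `A = ℤ[Γ]`. -/
abbrev A := AddMonoidAlgebra ℤ Γ

variable {Γ}

/-- The basis element `q^γ` of `A`. -/
def qe (γ : Γ) : A Γ := AddMonoidAlgebra.single γ 1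

/-- `A_{<0}`: the ℤ-span of the `q^γ` with `γ < 0`, i.e. elements supported in negative degrees. -/
def Alt0 (Γ : Type) [AddCommGroup Γ] [LinearOrder Γ] [IsOrderedAddMonoid Γ] : Set (A Γ) :=
  {a : A Γ | ∀ γ ∈ a.coeff.support, γ < 0}

/-- The degree of an element of `A` (`⊥` for `0`). -/
def adeg (a : A Γ) : WithBot Γ := a.coeff.support.max

variable {B W : Type} [Group W] {M : CoxeterMatrix B}
variable {H : Type} [Ring H]

/-- Bundled data of a Coxeter system `(W,S)` together with a positive weight function `L`,
its Hecke algebra `H` over `A = ℤ[Γ]` with standard basis `T`, the bar involution, and the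
Kazhdan-Lusztig basis `C`. -/
structure KLData (M : CoxeterMatrix B) (W : Type) [Group W] (Γ : Type)
    [AddCommGroup Γ] [LinearOrder Γ] [IsOrderedAddMonoid Γ] (H : Type) [Ring H] [Algebra (A Γ) H] where
  /-- the Coxeter system -/
  cs : CoxeterSystem M W
  /-- the weight function -/
  L : W → Γ
  L_add : ∀ w w' : W, cs.length (w * w') = cs.length w + cs.length w' →
    L (w * w') = L w + L w'
  L_pos : ∀ w : W, w ≠ 1 → 0 < L w
  /-- the standard basis `T_w` of the Hecke algebra -/
  bT : Module.Basis W (A Γ) H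
  T_mul : ∀ w w' : W, cs.length (w * w') = cs.length w + cs.length w' →
    bT w * bT w' = bT (w * w')
  T_quad : ∀ i : B,
    (bT (cs.simple i) + algebraMap (A Γ) H (qe (-(L (cs.simple i))))) *
      (bT (cs.simple i) - algebraMap (A Γ) H (qe (L (cs.simple i)))) = 0
  /-- the bar involution -/
  bar : H →+* H
  bar_bar : ∀ h : H, bar (bar h) = h
  bar_q : ∀ γ : Γ, bar (algebraMap (A Γ) H (qe γ)) = algebraMap (A Γ) H (qe (-γ))
  bar_T : ∀ w : W, bar (bT w) * bT w⁻¹ = 1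
  bar_T' : ∀ w : W, bT w⁻¹ * bar (bT w) = 1
  /-- the Kazhdan-Lusztig basis `C_w` -/
  bC : Module.Basis W (A Γ) H
  bar_C : ∀ w : W, bar (bC w) = bC w
  C_mod : ∀ w v : W, bT.repr (bC w - bT w) v ∈ Alt0 Γ

namespace KLData

variable [Algebra (A Γ) H] (d : KLData M W Γ H)

/-- `T_w` -/
def T (w : W) : H := d.bT w

/-- `C_w` -/
def C (w : W) : H := d.bC w

/-- `H_{<0} = ⊕_w A_{<0} T_w`. -/
def Hlt0 : Set H := {h : H | ∀ w : W, d.bT.repr h w ∈ Alt0 Γ}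

/-- The structure constants `h_{x,y,z}` of the KL basis. -/
def hk (x y z : W) : A Γ := d.bC.repr (d.C x * d.C y) z

/-- One step of the preorder `≤_L` : `x` appears in `C_z C_y` for some `z`. -/
def leLstep (x y : W) : Prop := ∃ z : W, d.bC.repr (d.C z * d.C y) x ≠ 0

/-- The preorder `≤_L`. -/
def leL : W → W → Prop := Relation.ReflTransGen d.leLstep

/-- `x ~_L y` -/
def simL (x y : W) : Prop := d.leL x y ∧ d.leL y x

/-- `x ≤_R y` -/
def leR (x y : W) : Prop := d.leL x⁻¹ y⁻¹

/-- `x ~_R y` -/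
def simR (x y : W) : Prop := d.simL x⁻¹ y⁻¹

/-- The preorder `≤_LR`, generated by `≤_L` and `≤_R`. -/
def leLR : W → W → Prop :=
  Relation.ReflTransGen (fun x y => d.leLstep x y ∨ d.leLstep x⁻¹ y⁻¹)

/-- `x ~_LR y` -/
def simLR (x y : W) : Prop := d.leLR x y ∧ d.leLR y x

/-- left cells -/
def IsLeftCell (Θ : Set W) : Prop := ∃ x : W, Θ = {y | d.simL x y}

/-- right cells -/
def IsRightCell (Φ : Set W) : Prop := ∃ x : W, Φ = {y | d.simR x y}

/-- two-sided cells -/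
def IsTwoSidedCell (c : Set W) : Prop := ∃ x : W, c = {y | d.simLR x y}

/-- `z < c` for a two-sided cell `c`. -/
def ltc (c : Set W) (z : W) : Prop := z ∉ c ∧ ∀ w ∈ c, d.leLR z w

/-- `z ≤ c` for a two-sided cell `c`. -/
def lec (c : Set W) (z : W) : Prop := ∀ w ∈ c, d.leLR z w

/-- The ideal `H_{<c}`, spanned by the `C_z` with `z < c`. -/
def Hltc (c : Set W) : Submodule (A Γ) H :=
  Submodule.span (A Γ) (d.C '' {z : W | d.ltc c z})

/-- Bruhat order on `W`. -/
def bruhatLE : W → W → Prop :=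
  Relation.ReflTransGen (fun x y => ∃ t : W, d.cs.IsReflection t ∧ y = x * t ∧
    d.cs.length x < d.cs.length y)

/-- Strict Bruhat order on `W`. -/
def bruhatLT (x y : W) : Prop := d.bruhatLE x y ∧ x ≠ y

/-- Duflo order: `x ≤_D y` iff `l(x⁻¹y) = l(y) - l(x)`. -/
def dufloLE (x y : W) : Prop :=
  d.cs.length x + d.cs.length (x⁻¹ * y) = d.cs.length y

/-- The `A`-linear anti-automorphism `♭` of `H` with `T_w ↦ T_{w⁻¹}`. -/
def flat : H →ₗ[A Γ] H := d.bT.constr ℕ (fun w => d.bT w⁻¹)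

/-- `P_{e,z}` : the coefficient of `T_e` in `C_z`. -/
def Pel (z : W) : A Γ := d.bT.repr (d.C z) 1

/-- `Δ(z)`, defined by `P_{e,z} = n_z q^{-Δ(z)} + lower degree terms`. -/
def Del (z : W) : Γ := -(WithBot.unbotD 0 (d.Pel z).coeff.support.max)

/-- `n_z`, defined by `P_{e,z} = n_z q^{-Δ(z)} + lower degree terms`. -/
def nz (z : W) : ℤ := (d.Pel z).coeff (-(d.Del z))

/-- `af : W → Γ` is Lusztig's `a`-function iff for each `z`, `af z` is the (attained)
supremum of the degrees of the `h_{x,y,z}`. -/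
def IsAFunction (af : W → Γ) : Prop :=
  ∀ z : W, (∀ x y : W, adeg (d.hk x y z) ≤ (af z : WithBot Γ)) ∧
    (∃ x y : W, adeg (d.hk x y z) = (af z : WithBot Γ))

/-- `γ_{x,y,z}` : the coefficient of `q^{a(z⁻¹)}` in `h_{x,y,z⁻¹}`. -/
def gam (af : W → Γ) (x y z : W) : ℤ := (d.hk x y z⁻¹).coeff (af z⁻¹)

/-- The set `𝒟 = {z | a(z) = Δ(z)}`. -/
def Dset (af : W → Γ) : Set W := {z : W | af z = d.Del z}

end KLData

variable [Algebra (A Γ) H]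

/-- Assumption (*): a two-sided cell `c` equipped with subsets `D ⊆ c` and
`B_d, U_d ⊆ W` (`d ∈ D`) satisfying conditions (ia)-(iv). -/
structure CellDecomp (d : KLData M W Γ H) (c : Set W) where
  isCell : d.IsTwoSidedCell c
  D : Set W
  Bd : W → Set W
  Ud : W → Set W
  D_sub : D ⊆ c
  -- (ia) : c = c⁻¹ = ⊔_{d ∈ D} B_d d U_d (disjoint union)
  c_inv : ∀ w : W, w ∈ c ↔ w⁻¹ ∈ c
  c_eq : c = ⋃ d0 ∈ D, {w : W | ∃ b ∈ Bd d0, ∃ u ∈ Ud d0, w = b * d0 * u}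
  disj : ∀ d1 ∈ D, ∀ d2 ∈ D, d1 ≠ d2 →
    Disjoint {w : W | ∃ b ∈ Bd d1, ∃ u ∈ Ud d1, w = b * d1 * u}
             {w : W | ∃ b ∈ Bd d2, ∃ u ∈ Ud d2, w = b * d2 * u}
  -- (ib)
  len_add : ∀ d0 ∈ D, ∀ b ∈ Bd d0, ∀ u ∈ Ud d0,
    d.cs.length (b * d0 * u) = d.cs.length b + d.cs.length d0 + d.cs.length u
  -- (ic)
  one_mem_B : ∀ d0 ∈ D, (1 : W) ∈ Bd d0
  one_mem_U : ∀ d0 ∈ D, (1 : W) ∈ Ud d0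
  Binv_sub_U : ∀ d0 ∈ D, ∀ b ∈ Bd d0, b⁻¹ ∈ Ud d0
  -- (id)
  not_mem_c : ∀ d0 ∈ D, ∀ w : W, w ∉ Ud d0 →
    (∀ i : B, d.bruhatLE (d.cs.simple i) d0 →
      d.cs.length (d.cs.simple i * w) = d.cs.length w + 1) → d0 * w ∉ c
  -- (iia) : each d ∈ D is an involution in a finite parabolic subgroup
  d_inv : ∀ d0 ∈ D, d0 * d0 = 1 ∧ d0 ≠ 1
  d_parabolic : ∀ d0 ∈ D, ∃ I : Set B,
    (Subgroup.closure (d.cs.simple '' I) : Set W).Finite ∧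
    d0 ∈ Subgroup.closure (d.cs.simple '' I)
  s_len : ∀ d0 ∈ D, ∀ i : B, d.bruhatLE (d.cs.simple i) d0 →
    ∀ u ∈ Ud d0, d.cs.length (d.cs.simple i * u) = d.cs.length u + 1
  -- (iib)
  TsC : ∀ d0 ∈ D, ∀ i : B, d.bruhatLE (d.cs.simple i) d0 →
    ∃ a : A Γ, d.T (d.cs.simple i) * d.C d0 - a • d.C d0 ∈ d.Hltc c
  -- (iic)
  h_ne : ∀ d0 ∈ D, d.hk d0 d0 d0 ≠ 0
  -- (iii)
  dU_rightCell : ∀ d0 ∈ D, d.IsRightCell {w : W | ∃ u ∈ Ud d0, w = d0 * u}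
  -- (iv)
  TCT : ∀ d0 ∈ D, ∀ b ∈ Bd d0, ∀ u ∈ Ud d0,
    ∃ h0 ∈ d.Hlt0, ∃ h1 ∈ d.Hltc c,
      d.T b * d.C d0 * d.T u - d.T (b * d0 * u) = h0 + h1

namespace CellDecomp

variable {d : KLData M W Γ H} {c : Set W} (cd : CellDecomp d c)

/-- `F` is the element `F_w` : `F = T_w + Σ_{y ∈ U_d, y < w} p_{y,w} T_y` with
`p_{y,w} ∈ A_{<0}`, and `C_d F ≡ C_{dw} mod H_{<c}`. -/
def IsF (d0 w : W) (F : H) : Prop :=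
  (d.bT.repr F w = 1 ∧
    ∀ y : W, y ≠ w → d.bT.repr F y ≠ 0 →
      y ∈ cd.Ud d0 ∧ d.bruhatLT y w ∧ d.bT.repr F y ∈ Alt0 Γ) ∧
  d.C d0 * F - d.C (d0 * w) ∈ d.Hltc c

/-- The right cell `Φ_{b,d} = b d U_d`. -/
def Phi (b d0 : W) : Set W := {x : W | ∃ u ∈ cd.Ud d0, x = b * d0 * u}

/-- The left cell `Θ_{b,d} = Φ_{b,d}⁻¹`. -/
def Theta (b d0 : W) : Set W := {x : W | ∃ u ∈ cd.Ud d0, x = u⁻¹ * d0 * b⁻¹}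

end CellDecomp

/-- The Coxeter matrix of affine type C̃2: generators `s0 s1 s2`,
`(s0 s1)⁴ = (s1 s2)⁴ = (s0 s2)² = 1`. -/
def Ct2 : CoxeterMatrix (Fin 3) where
  M := !![1, 4, 2; 4, 1, 4; 2, 4, 1]
  isSymm := by decide
  diagonal := by decide
  off_diagonal := by intro i i'; fin_cases i <;> fin_cases i' <;> simp

/-- The Coxeter matrix of affine type G̃2: generators `s0 s1 s2`,
`(s0 s1)³ = (s1 s2)⁶ = (s0 s2)² = 1`. -/
def Gt2 : CoxeterMatrix (Fin 3) where
  M := !![1, 3, 2; 3, 1, 6; 2, 6, 1]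
  isSymm := by decide
  diagonal := by decide
  off_diagonal := by intro i i'; fin_cases i <;> fin_cases i' <;> simp

/-- `ξ_γ = q^γ - q^{-γ}`. -/
def xi (γ : Γ) : A Γ := qe γ - qe (-γ)

/-- `η_γ = q^γ + q^{-γ}`. -/
def eta (γ : Γ) : A Γ := qe γ + qe (-γ)


namespace KLData

variable [Algebra (A Γ) H] (d : KLData M W Γ H)

/-- The free `A ⊗_ℤ A`-module with basis `{E_w : w ∈ c}`. -/
abbrev Emod (Γ : Type) [AddCommGroup Γ] [LinearOrder Γ] [IsOrderedAddMonoid Γ] {W : Type} (c : Set W) :=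
  ↥c →₀ (A Γ ⊗[ℤ] A Γ)

/-- `C_x ⬝ E_w = Σ_{z ∈ c} (h_{x,w,z} ⊗ 1) E_z`. -/
def lactB (c : Set W) (x : W) (w : ↥c) : Emod Γ c :=
  Finsupp.mapRange (fun a => a ⊗ₜ[ℤ] (1 : A Γ)) (by simp)
    ((d.bC.repr (d.C x * d.C (w : W))).subtypeDomain (· ∈ c))

/-- The left action of `C_x` on `E`, extended `(A ⊗ A)`-linearly from the basis. -/
def lact (c : Set W) (x : W) (v : Emod Γ c) : Emod Γ c :=
  v.sum fun w t => t • d.lactB c x w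

/-- `E_w ⬝ C_y = Σ_{z ∈ c} (1 ⊗ h_{w,y,z}) E_z`. -/
def ractB (c : Set W) (y : W) (w : ↥c) : Emod Γ c :=
  Finsupp.mapRange (fun a => (1 : A Γ) ⊗ₜ[ℤ] a) (by simp)
    ((d.bC.repr (d.C (w : W) * d.C y)).subtypeDomain (· ∈ c))

/-- The right action of `C_y` on `E`, extended `(A ⊗ A)`-linearly from the basis. -/
def ract (c : Set W) (y : W) (v : Emod Γ c) : Emod Γ c :=
  v.sum fun w t => t • d.ractB c y w

end KLData

end KL

open KL

/-!
Let `I` be the set of simple reflections lying below `d` in the Bruhat order, so that `d ∈ W_I`.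
Bar-invariance of `C_d`, together with the unitriangularity of `bar T_x` inside every standard
parabolic subgroup containing `x`, forces `C_d - T_d = Σ p_y T_y` with `y ∈ W_I`, `ℓ(y) < ℓ(d)` and
`p_y ∈ A_{<0}`. By (iia) every `u ∈ U_d` has no left descent in `I`, so `ℓ(yu) = ℓ(y) + ℓ(u)` and
`T_y T_u = T_{yu}` for `y ∈ W_I`; this gives `C_d T_u ≡ T_{du} mod H_{<0}`. This length additivity
rests on the exchange property, obtained from Tits' sign cocycle.

By (iib), the `h ∈ H` with `h C_d ∈ A C_d + H_{<c}` form a set closed under products (as `H_{<c}` is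
a left ideal) containing every `T_s`, `s ∈ I`; hence it contains every `T_y`, `y ∈ W_I`, and so
`C_d` itself. Thus `C_d C_d ≡ β C_d mod H_{<c}`, and comparing coefficients of `C_d` (note
`d ∈ c`) gives `β = h_{d,d,d}`.
-/

namespace CoxeterSystem

open List

variable {B W : Type*} [Group W] {M : CoxeterMatrix B}

theorem IsReduced.of_cons {cs : CoxeterSystem M W} {i : B} {ω : List B}
    (h : cs.IsReduced (i :: ω)) : cs.IsReduced ω := by
  simpa using h.drop 1

theorem IsReduced.length_simple_mul {cs : CoxeterSystem M W} {i : B} {ω : List B}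
    (h : cs.IsReduced (i :: ω)) :
    cs.length (cs.simple i * cs.wordProd ω) = cs.length (cs.wordProd ω) + 1 := by
  rw [← wordProd_cons, h, h.of_cons, length_cons]

variable (cs : CoxeterSystem M W)

local prefix:100 "s" => cs.simple
local prefix:100 "π" => cs.wordProd
local prefix:100 "ℓ" => cs.length

/-- The generators of Tits' sign cocycle, which yields the exchange property. -/
def exchangeAction (i : B) : Function.End (W × ZMod 2) :=
  fun p => (s i * p.1 * s i, p.2 + if p.1 = s i then 1 else 0)

theorem simple_mul_simple_conj (j : B) (t : W) : s j * (s j * t * s j) * s j = t := by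
  simp only [← mul_assoc, simple_mul_simple_self, one_mul, simple_mul_simple_cancel_right]

theorem inv_mul_pow_mul_simple (i j : B) (r : ℕ) :
    (s i * s j)⁻¹ * ((s i * s j)⁻¹ ^ r * s j) * (s i * s j) = (s i * s j)⁻¹ ^ (r + 2) * s j := by
  have h : s j * (s i * s j) = (s i * s j)⁻¹ * s j := by
    rw [mul_inv_rev, inv_simple, inv_simple, mul_assoc]
  rw [mul_assoc, mul_assoc, h, ← mul_assoc, ← pow_succ', ← mul_assoc, ← pow_succ]

theorem exchangeAction_mul_pow (i j : B) (k : ℕ) (t : W) (e : ZMod 2) :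
    ((cs.exchangeAction i * cs.exchangeAction j) ^ k) (t, e) =
      ((s i * s j) ^ k * t * (s i * s j)⁻¹ ^ k,
        e + ∑ r ∈ Finset.range (2 * k), if t = (s i * s j)⁻¹ ^ r * s j then 1 else 0) := by
  set ρ := s i * s j with hρ
  induction k generalizing t e with
  | zero => simp [Function.End.one_def]
  | succ k ih =>
    have hstep : (cs.exchangeAction i * cs.exchangeAction j) (t, e) =
        (ρ * t * ρ⁻¹, e + ((if t = ρ⁻¹ ^ 0 * s j then 1 else 0) +
          (if t = ρ⁻¹ ^ 1 * s j then 1 else 0))) := by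
      have hc : s j * t * s j = s i ↔ t = ρ⁻¹ ^ 1 * s j := by
        rw [pow_one, hρ, mul_inv_rev, inv_simple, inv_simple]
        constructor
        · rintro h; rw [← h, cs.simple_mul_simple_conj j t]
        · rintro rfl; exact cs.simple_mul_simple_conj j (s i)
      change (s i * (s j * t * s j) * s i,
        e + (if t = s j then 1 else 0) + if s j * t * s j = s i then 1 else 0) = _
      simp only [hc, pow_zero, one_mul, Prod.mk.injEq]
      refine ⟨by rw [hρ, mul_inv_rev, inv_simple, inv_simple]; group, by ring⟩
    have hshift (r : ℕ) : ρ * t * ρ⁻¹ = ρ⁻¹ ^ r * s j ↔ t = ρ⁻¹ ^ (r + 2) * s j := by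
      rw [← inv_mul_pow_mul_simple cs i j r, ← hρ]
      constructor
      · rintro h; rw [← h]; group
      · rintro h; rw [h]; group
    rw [pow_succ]
    change ((cs.exchangeAction i * cs.exchangeAction j) ^ k)
      ((cs.exchangeAction i * cs.exchangeAction j) (t, e)) = _
    rw [hstep, ih,
      show 2 * (k + 1) = 2 * k + 1 + 1 by ring, Finset.sum_range_succ', Finset.sum_range_succ']
    simp only [hshift, Prod.mk.injEq]
    refine ⟨by rw [pow_succ, pow_succ']; group, by ring⟩

theorem isLiftable_exchangeAction : M.IsLiftable cs.exchangeAction := by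
  intro i j
  funext ⟨t, e⟩
  have hρ : (s i * s j) ^ M i j = 1 := cs.simple_mul_simple_pow i j
  have hρ' (r : ℕ) : (s i * s j)⁻¹ ^ (M i j + r) = (s i * s j)⁻¹ ^ r := by
    rw [pow_add, inv_pow, hρ, inv_one, one_mul]
  rw [exchangeAction_mul_pow, two_mul, Finset.sum_range_add]
  simp only [hρ', ← two_mul, inv_pow, hρ, inv_one, one_mul, mul_one]
  rw [show (2 : ZMod 2) = 0 from rfl, zero_mul, add_zero]
  rfl

def exchangeHom : W →* Function.End (W × ZMod 2) :=
  cs.lift ⟨cs.exchangeAction, cs.isLiftable_exchangeAction⟩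

theorem count_leftInvSeq_cons (i : B) (ω : List B) (t : W) :
    (cs.leftInvSeq (i :: ω)).count t =
      (cs.leftInvSeq ω).count (s i * t * s i) + if t = s i then 1 else 0 := by
  have ht : t = MulAut.conj (s i) (s i * t * s i) := by
    rw [MulAut.conj_apply, inv_simple, cs.simple_mul_simple_conj]
  rw [leftInvSeq, count_cons]
  nth_rw 1 [ht]
  rw [count_map_of_injective _ _ (MulAut.conj (s i)).injective]
  by_cases h : t = s i <;> simp [h, Ne.symm]

/-- The parity of the number of occurrences of `t` in the left inversion sequence of `ω`
depends only on `π ω`. -/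
theorem exchangeHom_wordProd (ω : List B) (t : W) :
    cs.exchangeHom (π ω) ((π ω)⁻¹ * t * π ω, 0) = (t, ((cs.leftInvSeq ω).count t : ZMod 2)) := by
  induction ω generalizing t with
  | nil => simp [Function.End.one_def]
  | cons i ω ih =>
    have hin : (s i * π ω)⁻¹ * t * (s i * π ω) = (π ω)⁻¹ * (s i * t * s i) * π ω := by
      rw [mul_inv_rev, inv_simple]; group
    rw [wordProd_cons, map_mul]
    change cs.exchangeHom (s i) (cs.exchangeHom (π ω) ((s i * π ω)⁻¹ * t * (s i * π ω), 0)) = _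
    rw [hin, ih, exchangeHom, lift_apply_simple, count_leftInvSeq_cons]
    change (s i * (s i * t * s i) * s i, _ + if s i * t * s i = s i then 1 else 0) = _
    have hc : s i * t * s i = s i ↔ t = s i := by
      rw [← mul_left_inj (s i), simple_mul_simple_cancel_right, ← mul_right_inj (s i),
        simple_mul_simple_cancel_left, simple_mul_simple_self, mul_one]
    simp [hc, cs.simple_mul_simple_conj]

theorem exists_eraseIdx_of_isLeftDescent {ω : List B} {i : B}
    (hi : cs.IsLeftDescent (π ω) i) : ∃ j < ω.length, s i * π ω = π (ω.eraseIdx j) := by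
  obtain ⟨ν, hν, hπν⟩ := cs.exists_isReduced (s i * π ω)
  have hword : π (i :: ν) = π ω := by rw [wordProd_cons, ← hπν, simple_mul_simple_cancel_left]
  have hν_not : s i ∉ cs.leftInvSeq ν := fun h => by
    have := (cs.isLeftInversion_of_mem_leftInvSeq hν h).2
    rw [← hπν, simple_mul_simple_cancel_left] at this
    exact lt_asymm hi this
  have hcount := congrArg Prod.snd <|
    (cs.exchangeHom_wordProd ω (s i)).symm.trans (hword ▸ cs.exchangeHom_wordProd (i :: ν) (s i))
  rw [count_leftInvSeq_cons, simple_mul_simple_self, one_mul, count_eq_zero.mpr hν_not]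
    at hcount
  have hmem : s i ∈ cs.leftInvSeq ω := by
    by_contra h
    rw [count_eq_zero.mpr h] at hcount
    simp at hcount
  obtain ⟨j, hj, hget⟩ := getElem_of_mem hmem
  refine ⟨j, by simpa using hj, ?_⟩
  rw [← cs.getD_leftInvSeq_mul_wordProd, getD_eq_getElem _ 1 hj, hget]

theorem exists_isReduced_letters_subset (ω : List B) :
    ∃ ν : List B, cs.IsReduced ν ∧ (∀ i ∈ ν, i ∈ ω) ∧ π ν = π ω := by
  induction ω with
  | nil => exact ⟨[], by simp [IsReduced], by simp, rfl⟩
  | cons i ω ih =>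
    obtain ⟨ν, hν, hsub, hprod⟩ := ih
    have hsub' : ∀ j ∈ ν, j ∈ i :: ω := fun j hj => mem_cons_of_mem i (hsub j hj)
    rcases cs.length_simple_mul (π ν) i with hup | hdown
    · refine ⟨i :: ν, ?_, ?_, by rw [wordProd_cons, wordProd_cons, hprod]⟩
      · rw [IsReduced, wordProd_cons, hup, hν, length_cons]
      · rintro j (_ | ⟨_, hj⟩)
        exacts [mem_cons_self, hsub' j hj]
    · obtain ⟨j, hj, hex⟩ := cs.exists_eraseIdx_of_isLeftDescent (ω := ν) (i := i)
        (by rw [IsLeftDescent]; omega)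
      refine ⟨ν.eraseIdx j, ?_, fun k hk => hsub' k ((eraseIdx_sublist ν j).subset hk), ?_⟩
      · rw [IsReduced, ← hex, length_eraseIdx_of_lt hj, ← hν]
        omega
      · rw [← hex, wordProd_cons, hprod]

def parabolic (I : Set B) : Subgroup W := Subgroup.closure (cs.simple '' I)

variable {cs}

theorem simple_mem_parabolic {I : Set B} {i : B} (hi : i ∈ I) : s i ∈ cs.parabolic I :=
  Subgroup.subset_closure ⟨i, hi, rfl⟩

theorem wordProd_mem_parabolic {I : Set B} {ω : List B} (h : ∀ i ∈ ω, i ∈ I) :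
    π ω ∈ cs.parabolic I := by
  induction ω with
  | nil => exact one_mem _
  | cons i ω ih =>
    rw [wordProd_cons]
    exact mul_mem (simple_mem_parabolic (h i mem_cons_self))
      (ih fun j hj => h j (mem_cons_of_mem i hj))

theorem exists_isReduced_of_mem_parabolic {I : Set B} {w : W} (hw : w ∈ cs.parabolic I) :
    ∃ ω : List B, cs.IsReduced ω ∧ (∀ i ∈ ω, i ∈ I) ∧ w = π ω := by
  have hword : ∃ ω : List B, (∀ i ∈ ω, i ∈ I) ∧ π ω = w := by
    induction hw using Subgroup.closure_induction with
    | mem _ h =>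
      obtain ⟨i, hi, rfl⟩ := h
      exact ⟨[i], by simpa using hi, wordProd_singleton cs i⟩
    | one => exact ⟨[], by simp, wordProd_nil cs⟩
    | mul _ _ _ _ hx hy =>
      obtain ⟨ω, hω, rfl⟩ := hx
      obtain ⟨ω', hω', rfl⟩ := hy
      exact ⟨ω ++ ω', by simpa using fun i hi => hi.elim (hω i) (hω' i), wordProd_append cs ω ω'⟩
    | inv _ _ hx =>
      obtain ⟨ω, hω, rfl⟩ := hx
      exact ⟨ω.reverse, by simpa using hω, wordProd_reverse cs ω⟩
  obtain ⟨ω, hω, rfl⟩ := hword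
  obtain ⟨ν, hν, hsub, hprod⟩ := cs.exists_isReduced_letters_subset ω
  exact ⟨ν, hν, fun i hi => hω i (hsub i hi), hprod.symm⟩

theorem exists_mem_eq_simple_of_mem_parabolic {I : Set B} {t : W} (ht : t ∈ cs.parabolic I)
    (hlen : ℓ t = 1) : ∃ i ∈ I, t = s i := by
  obtain ⟨ω, hω, hωI, rfl⟩ := exists_isReduced_of_mem_parabolic ht
  obtain ⟨i, rfl⟩ := List.length_eq_one_iff.mp (hω.symm.trans hlen)
  exact ⟨i, hωI i mem_cons_self, wordProd_singleton cs i⟩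

theorem exists_mem_simple_mul_eq_mul_simple {I : Set B} {v : W}
    (hadd : ∀ y ∈ cs.parabolic I, ℓ (v * y) = ℓ v + ℓ y) {q : B} (hq : ℓ (s q * v) = ℓ v + 1)
    {x : W} (hx : x ∈ cs.parabolic I) (hdesc : cs.IsLeftDescent (v * x) q) :
    ∃ i ∈ I, s q * v = v * s i := by
  obtain ⟨μ, hμ, rfl⟩ := cs.exists_isReduced v
  obtain ⟨ν, hν, hνI, rfl⟩ := exists_isReduced_of_mem_parabolic hx
  obtain ⟨j, hj, hex⟩ := cs.exists_eraseIdx_of_isLeftDescent (ω := μ ++ ν) (i := q)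
    (by rwa [wordProd_append])
  rcases lt_or_ge j μ.length with hjμ | hjμ
  · -- deleting a letter of `μ` would make `q` a left descent of `π μ`
    rw [eraseIdx_append_of_lt_length hjμ, wordProd_append, wordProd_append, ← mul_assoc,
      mul_left_inj] at hex
    have := cs.length_wordProd_le (μ.eraseIdx j)
    rw [length_eraseIdx_of_lt hjμ, ← hex, hq, hμ] at this
    omega
  · rw [eraseIdx_append_of_length_le hjμ, wordProd_append, wordProd_append, ← mul_assoc] at hex
    have ht : π (ν.eraseIdx (j - μ.length)) * (π ν)⁻¹ ∈ cs.parabolic I :=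
      mul_mem (wordProd_mem_parabolic fun i hi => hνI i ((eraseIdx_sublist _ _).subset hi))
        (inv_mem (wordProd_mem_parabolic hνI))
    have hqt : s q * π μ = π μ * (π (ν.eraseIdx (j - μ.length)) * (π ν)⁻¹) := by
      rw [← mul_assoc, ← hex]; group
    obtain ⟨i, hi, hti⟩ := exists_mem_eq_simple_of_mem_parabolic ht (by
      have := hadd _ ht
      rw [← hqt, hq] at this
      omega)
    exact ⟨i, hi, hti ▸ hqt⟩

theorem length_mul_of_mem_parabolic_right {I : Set B} {v : W}
    (hv : ∀ i ∈ I, ℓ (v * s i) = ℓ v + 1) {x : W} (hx : x ∈ cs.parabolic I) :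
    ℓ (v * x) = ℓ v + ℓ x := by
  induction hn : ℓ v generalizing v x with
  | zero => rw [cs.length_eq_zero_iff.mp hn, one_mul, zero_add]
  | succ n ih =>
    obtain ⟨q, hq⟩ := cs.exists_leftDescent_of_ne_one (w := v) (by rintro rfl; simp at hn)
    obtain ⟨v, rfl⟩ : ∃ v', v = s q * v' := ⟨s q * v, (simple_mul_simple_cancel_left cs q).symm⟩
    rw [IsLeftDescent, simple_mul_simple_cancel_left] at hq
    have hqv : ℓ (s q * v) = ℓ v + 1 := (cs.length_simple_mul v q).resolve_right (by omega)
    have hv' : ∀ i ∈ I, ℓ (v * s i) = ℓ v + 1 := fun i hi => by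
      have h1 := hv i hi
      have h2 := cs.length_mul_le (s q) (v * s i)
      rw [mul_assoc] at h1
      rw [cs.length_simple] at h2
      rcases cs.length_mul_simple v i with h | h <;> omega
    have hadd : ∀ y ∈ cs.parabolic I, ℓ (v * y) = ℓ v + ℓ y := fun y hy => by
      rw [ih hv' hy (by omega)]; omega
    by_cases hdesc : cs.IsLeftDescent (v * x) q
    · obtain ⟨i, hi, hqi⟩ := exists_mem_simple_mul_eq_mul_simple hadd hqv hx hdesc
      have h1 := hv i hi
      rw [hqi, mul_assoc, simple_mul_simple_self, mul_one] at h1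
      have := hv' i hi
      omega
    · rw [IsLeftDescent, not_lt] at hdesc
      rw [mul_assoc, (cs.length_simple_mul _ q).resolve_right (by omega), hadd x hx]
      omega

theorem length_mul_of_mem_parabolic_left {I : Set B} {u : W} (hu : ∀ i ∈ I, ℓ (s i * u) = ℓ u + 1)
    {y : W} (hy : y ∈ cs.parabolic I) : ℓ (y * u) = ℓ y + ℓ u := by
  have hu' : ∀ i ∈ I, ℓ (u⁻¹ * s i) = ℓ u⁻¹ + 1 := fun i hi => by
    rw [← inv_simple, ← mul_inv_rev, length_inv, length_inv, hu i hi]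
  rw [← length_inv, mul_inv_rev, length_mul_of_mem_parabolic_right hu' (inv_mem hy), length_inv,
    length_inv, add_comm]

end CoxeterSystem

namespace KL

variable {Γ : Type} [AddCommGroup Γ]

def barA : A Γ ≃ₐ[ℤ] A Γ := AddMonoidAlgebra.domCongr ℤ ℤ (AddEquiv.neg Γ)

theorem coeff_barA (a : A Γ) (γ : Γ) : (barA a).coeff γ = a.coeff (-γ) :=
  AddMonoidAlgebra.coeff_domCongr _ a γ

theorem barA_qe (γ : Γ) : barA (qe γ) = qe (-γ) :=
  AddMonoidAlgebra.domCongr_single _ γ 1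

variable [LinearOrder Γ] [IsOrderedAddMonoid Γ]

def alt0 : AddSubgroup (A Γ) where
  carrier := Alt0 Γ
  add_mem' ha hb γ hγ := (Finset.mem_union.mp (Finsupp.support_add hγ)).elim (ha γ) (hb γ)
  zero_mem' γ hγ := by simp at hγ
  neg_mem' ha γ hγ := ha γ (by simpa [AddMonoidAlgebra.coeff_neg] using hγ)

theorem eq_zero_of_barA_eq_self {a : A Γ} (hbar : barA a = a) (ha : a ∈ Alt0 Γ) : a = 0 := by
  refine AddMonoidAlgebra.coeff_injective (Finsupp.ext fun γ => ?_)
  by_contra hγ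
  have hneg : a.coeff (-γ) ≠ 0 := by rwa [← coeff_barA, hbar]
  have h1 := ha γ (Finsupp.mem_support_iff.mpr hγ)
  have h2 := ha (-γ) (Finsupp.mem_support_iff.mpr hneg)
  exact lt_asymm h1 (neg_neg_iff_pos.mp h2)

end KL

theorem Module.Basis.sum_repr_smul {ι R M : Type*} [Semiring R] [AddCommMonoid M] [Module R M]
    (b : Module.Basis ι R M) (x : M) : ∑ i ∈ (b.repr x).support, b.repr x i • b i = x := by
  conv_rhs => rw [← b.linearCombination_repr x]
  rfl

theorem Submodule.mem_span_singleton_sup_iff {R M : Type*} [Semiring R] [AddCommGroup M]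
    [Module R M] {v x : M} {N : Submodule R M} : x ∈ (R ∙ v) ⊔ N ↔ ∃ a : R, x - a • v ∈ N := by
  simp only [Submodule.mem_sup, Submodule.mem_span_singleton]
  constructor
  · rintro ⟨_, ⟨a, rfl⟩, n, hn, rfl⟩
    exact ⟨a, by simpa using hn⟩
  · rintro ⟨a, hn⟩
    exact ⟨a • v, ⟨a, rfl⟩, x - a • v, hn, add_sub_cancel _ _⟩

namespace KL.KLData

open CoxeterSystem

variable {Γ : Type} [AddCommGroup Γ] [LinearOrder Γ] [IsOrderedAddMonoid Γ]
variable {B W : Type} [Group W] {M : CoxeterMatrix B} {H : Type} [Ring H] [Algebra (A Γ) H]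
variable (d : KLData M W Γ H)

local prefix:100 "s" => d.cs.simple
local prefix:100 "π" => d.cs.wordProd
local prefix:100 "ℓ" => d.cs.length

theorem repr_T (w : W) : d.bT.repr (d.T w) = Finsupp.single w 1 := d.bT.repr_self w

theorem repr_C (w : W) : d.bC.repr (d.C w) = Finsupp.single w 1 := d.bC.repr_self w

theorem T_mul_T {w w' : W} (h : ℓ (w * w') = ℓ w + ℓ w') : d.T w * d.T w' = d.T (w * w') :=
  d.T_mul w w' h

theorem T_one : d.T 1 = 1 := by
  have hidem : d.T 1 * d.T 1 = d.T 1 := by rw [d.T_mul_T (by simp), mul_one]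
  have hinv := d.bar_T 1
  rw [inv_one] at hinv
  change d.bar (d.T 1) * d.T 1 = 1 at hinv
  calc d.T 1 = d.bar (d.T 1) * d.T 1 * d.T 1 := by rw [hinv, one_mul]
    _ = 1 := by rw [mul_assoc, hidem, hinv]

theorem bar_algebraMap (a : A Γ) :
    d.bar (algebraMap (A Γ) H a) = algebraMap (A Γ) H (barA a) := by
  induction a using AddMonoidAlgebra.induction_linear with
  | zero => simp
  | add a b ha hb => simp only [map_add, ha, hb]
  | single γ n =>
    have h : (AddMonoidAlgebra.single γ n : A Γ) = n • qe γ := by simp [qe]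
    rw [h, map_zsmul, map_zsmul, map_zsmul, d.bar_q, map_zsmul, barA_qe]

theorem bar_smul (a : A Γ) (h : H) : d.bar (a • h) = barA a • d.bar h := by
  rw [Algebra.smul_def, map_mul, bar_algebraMap, ← Algebra.smul_def]

theorem T_simple_mul_self (i : B) :
    d.T (s i) * d.T (s i) = xi (d.L (s i)) • d.T (s i) + 1 := by
  have hq : algebraMap (A Γ) H (qe (-d.L (s i))) * algebraMap (A Γ) H (qe (d.L (s i))) = 1 := by
    rw [← map_mul, qe, qe, AddMonoidAlgebra.single_mul_single, neg_add_cancel, one_mul]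
    exact map_one _
  have h := d.T_quad i
  rw [mul_sub, add_mul, add_mul, ← Algebra.commutes (qe (d.L (s i))), hq] at h
  rw [xi, sub_smul, Algebra.smul_def, Algebra.smul_def]
  unfold KLData.T
  rw [← sub_eq_zero, ← h]
  abel

theorem bar_T_simple (i : B) : d.bar (d.T (s i)) = d.T (s i) - xi (d.L (s i)) • 1 := by
  have hinv := d.bar_T (s i)
  rw [inv_simple] at hinv
  change d.bar (d.T (s i)) * d.T (s i) = 1 at hinv
  have hright : d.T (s i) * (d.T (s i) - xi (d.L (s i)) • 1) = 1 := by
    rw [mul_sub, T_simple_mul_self, mul_smul_comm, mul_one, add_sub_cancel_left]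
  calc d.bar (d.T (s i)) = d.bar (d.T (s i)) * d.T (s i) * (d.T (s i) - xi (d.L (s i)) • 1) := by
        rw [mul_assoc, hright, mul_one]
    _ = _ := by rw [hinv, one_mul]

theorem T_simple_mul_T_of_isLeftDescent {i : B} {w : W} (h : d.cs.IsLeftDescent w i) :
    d.T (s i) * d.T w = xi (d.L (s i)) • d.T w + d.T (s i * w) := by
  have hlen := (d.cs.length_simple_mul w i).resolve_left (by rw [IsLeftDescent] at h; omega)
  have hw : d.T w = d.T (s i) * d.T (s i * w) := by
    rw [d.T_mul_T (by rw [simple_mul_simple_cancel_left, length_simple]; omega),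
      simple_mul_simple_cancel_left]
  rw [hw, ← mul_assoc, T_simple_mul_self, add_mul, one_mul, smul_mul_assoc]

def lowerSpan (I : Set B) (n : ℕ) : Submodule (A Γ) H :=
  Submodule.span (A Γ) (d.bT '' {z | z ∈ d.cs.parabolic I ∧ ℓ z < n})

theorem lowerSpan_mono (I : Set B) {n m : ℕ} (h : n ≤ m) : d.lowerSpan I n ≤ d.lowerSpan I m :=
  Submodule.span_mono (Set.image_mono fun _ hz => ⟨hz.1, hz.2.trans_le h⟩)

theorem T_mem_lowerSpan {I : Set B} {n : ℕ} {z : W} (hz : z ∈ d.cs.parabolic I) (hlt : ℓ z < n) :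
    d.T z ∈ d.lowerSpan I n :=
  Submodule.subset_span ⟨z, ⟨hz, hlt⟩, rfl⟩

theorem T_simple_mul_mem_lowerSpan {I : Set B} {i : B} (hi : i ∈ I) {n : ℕ} {r : H}
    (hr : r ∈ d.lowerSpan I n) : d.T (s i) * r ∈ d.lowerSpan I (n + 1) := by
  induction hr using Submodule.span_induction with
  | mem _ hx =>
    obtain ⟨z, ⟨hzI, hzn⟩, rfl⟩ := hx
    have hsz : s i * z ∈ d.cs.parabolic I := mul_mem (simple_mem_parabolic hi) hzI
    change d.T (s i) * d.T z ∈ _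
    rcases d.cs.length_simple_mul z i with hup | hdown
    · rw [d.T_mul_T (by rw [hup, length_simple, add_comm])]
      exact d.T_mem_lowerSpan hsz (by omega)
    · rw [d.T_simple_mul_T_of_isLeftDescent (by rw [IsLeftDescent]; omega)]
      exact add_mem (Submodule.smul_mem _ _ (d.T_mem_lowerSpan hzI (by omega)))
        (d.T_mem_lowerSpan hsz (by omega))
  | zero => rw [mul_zero]; exact zero_mem _
  | add x y _ _ hx hy => rw [mul_add]; exact add_mem hx hy
  | smul a x _ hx => rw [mul_smul_comm]; exact Submodule.smul_mem _ _ hx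

theorem bar_T_wordProd_sub_mem_lowerSpan {I : Set B} {ω : List B} (hω : d.cs.IsReduced ω)
    (hωI : ∀ i ∈ ω, i ∈ I) : d.bar (d.T (π ω)) - d.T (π ω) ∈ d.lowerSpan I ω.length := by
  induction ω with
  | nil => rw [wordProd_nil, T_one, map_one, sub_self]; exact zero_mem _
  | cons i ω ih =>
    have hωI' : ∀ j ∈ ω, j ∈ I := fun j hj => hωI j (List.mem_cons_of_mem i hj)
    have hr := ih hω.of_cons hωI'
    set r := d.bar (d.T (π ω)) - d.T (π ω)
    have hsplit : d.bar (d.T (π (i :: ω))) - d.T (π (i :: ω)) =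
        d.T (s i) * r - xi (d.L (s i)) • d.T (π ω) - xi (d.L (s i)) • r := by
      have hT : d.T (π (i :: ω)) = d.T (s i) * d.T (π ω) := by
        rw [wordProd_cons, d.T_mul_T (by rw [hω.length_simple_mul, length_simple, add_comm])]
      rw [hT, map_mul, bar_T_simple, ← add_sub_cancel (d.T (π ω)) (d.bar (d.T (π ω))), sub_mul,
        smul_mul_assoc, one_mul, mul_add, smul_add]
      abel
    have hlen : ℓ (π ω) < (i :: ω).length := by rw [hω.of_cons, List.length_cons]; omega
    rw [hsplit]
    exact sub_mem (sub_mem (d.T_simple_mul_mem_lowerSpan (hωI i List.mem_cons_self) hr)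
      (Submodule.smul_mem _ _ (d.T_mem_lowerSpan (wordProd_mem_parabolic hωI') hlen)))
      (Submodule.smul_mem _ _ (d.lowerSpan_mono I (by simp) hr))

theorem bar_T_sub_mem_lowerSpan {I : Set B} {x : W} (hx : x ∈ d.cs.parabolic I) :
    d.bar (d.T x) - d.T x ∈ d.lowerSpan I (ℓ x) := by
  obtain ⟨ω, hω, hωI, rfl⟩ := exists_isReduced_of_mem_parabolic hx
  rw [hω]
  exact d.bar_T_wordProd_sub_mem_lowerSpan hω hωI

theorem mem_parabolic_univ (x : W) : x ∈ d.cs.parabolic Set.univ := by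
  rw [parabolic, Set.image_univ, subgroup_closure_range_simple]
  exact Subgroup.mem_top x

theorem repr_bar_T_of_ne {I : Set B} {x z : W} (hx : x ∈ d.cs.parabolic I)
    (hz : d.bT.repr (d.bar (d.T x)) z ≠ 0) (hzx : z ≠ x) : z ∈ d.cs.parabolic I ∧ ℓ z < ℓ x := by
  refine d.bT.mem_span_image.mp (d.bar_T_sub_mem_lowerSpan hx) (Finsupp.mem_support_iff.mpr ?_)
  rwa [map_sub, Finsupp.sub_apply, repr_T, Finsupp.single_eq_of_ne hzx, sub_zero]

theorem repr_bar_T_self (x : W) : d.bT.repr (d.bar (d.T x)) x = 1 := by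
  have hnot : x ∉ (d.bT.repr (d.bar (d.T x) - d.T x)).support := fun h =>
    lt_irrefl _ (d.bT.mem_span_image.mp (d.bar_T_sub_mem_lowerSpan (d.mem_parabolic_univ x)) h).2
  rw [Finsupp.notMem_support_iff, map_sub, Finsupp.sub_apply, repr_T, Finsupp.single_eq_same,
    sub_eq_zero] at hnot
  exact hnot

theorem repr_of_bar_eq_self {h : H} (hbar : d.bar h = h) (z : W) :
    d.bT.repr h z = ∑ x ∈ (d.bT.repr h).support,
      barA (d.bT.repr h x) * d.bT.repr (d.bar (d.T x)) z := by
  conv_lhs => rw [← hbar, ← d.bT.sum_repr_smul h, map_sum, map_sum, Finsupp.finsetSum_apply]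
  simp only [bar_smul, map_smul, Finsupp.smul_apply, smul_eq_mul]
  rfl

theorem barA_repr_of_bar_eq_self {h : H} (hbar : d.bar h = h) {y : W}
    (hy : ∀ x ∈ (d.bT.repr h).support, x ≠ y → d.bT.repr (d.bar (d.T x)) y = 0) :
    barA (d.bT.repr h y) = d.bT.repr h y := by
  conv_rhs => rw [d.repr_of_bar_eq_self hbar y]
  rw [Finset.sum_eq_single y
    (fun x hx hxy => by rw [hy x hx hxy, mul_zero]) (fun hy => by
      rw [Finsupp.notMem_support_iff.mp hy, map_zero, zero_mul]), d.repr_bar_T_self, mul_one]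

theorem repr_C_mem_Alt0 {w y : W} (hy : y ≠ w) : d.bT.repr (d.C w) y ∈ Alt0 Γ := by
  have h : d.bT.repr (d.C w - d.T w) y ∈ Alt0 Γ := d.C_mod w y
  rwa [map_sub, Finsupp.sub_apply, repr_T, Finsupp.single_eq_of_ne hy, sub_zero] at h

theorem mem_parabolic_of_mem_support_repr_C {I : Set B} {w y : W} (hw : w ∈ d.cs.parabolic I)
    (hy : y ∈ (d.bT.repr (d.C w)).support) (hyw : y ≠ w) :
    y ∈ d.cs.parabolic I ∧ ℓ y < ℓ w := by
  by_contra! hbad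
  set N := (d.bT.repr (d.C w)).support.filter
    fun y => y ≠ w ∧ ¬(y ∈ d.cs.parabolic I ∧ ℓ y < ℓ w)
  obtain ⟨y, hyN, hmax⟩ := N.exists_max_image d.cs.length
    ⟨y, Finset.mem_filter.mpr ⟨hy, hyw, fun h => (hbad h.1).not_gt h.2⟩⟩
  obtain ⟨hy, hyw, hyI⟩ := Finset.mem_filter.mp hyN
  -- `y` is a maximal-length "bad" index, so no other `bar T_x` contributes to its coefficient
  have hbar : d.bar (d.C w) = d.C w := d.bar_C w
  have hfix := d.barA_repr_of_bar_eq_self hbar (y := y) fun x hx hxy => by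
    by_contra hr
    have hlt := (d.repr_bar_T_of_ne (d.mem_parabolic_univ x) hr (Ne.symm hxy)).2
    by_cases hxN : x ∈ N
    · exact (hmax x hxN).not_gt hlt
    have hxI : x ∈ d.cs.parabolic I ∧ ℓ x ≤ ℓ w := by
      rcases eq_or_ne x w with rfl | hxw
      · exact ⟨hw, le_rfl⟩
      · have := not_and.mp (mt (Finset.mem_filter.mpr ⟨hx, ·⟩) hxN) hxw
        exact (not_not.mp this).imp_right le_of_lt
    obtain ⟨hyI', hlt'⟩ := d.repr_bar_T_of_ne hxI.1 hr (Ne.symm hxy)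
    exact hyI ⟨hyI', hlt'.trans_le hxI.2⟩
  exact Finsupp.mem_support_iff.mp hy (eq_zero_of_barA_eq_self hfix (d.repr_C_mem_Alt0 hyw))

theorem mul_T_mem_Hlt0 {h : H} (hh : h ∈ d.Hlt0) {u : W}
    (hT : ∀ y ∈ (d.bT.repr h).support, d.T y * d.T u = d.T (y * u)) : h * d.T u ∈ d.Hlt0 := by
  have hexp : h * d.T u = ∑ y ∈ (d.bT.repr h).support, d.bT.repr h y • d.T (y * u) := by
    conv_lhs => rw [← d.bT.sum_repr_smul h]
    rw [Finset.sum_mul]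
    exact Finset.sum_congr rfl fun y hy => by rw [smul_mul_assoc, ← hT y hy]; rfl
  intro z
  rw [hexp, map_sum, Finsupp.finsetSum_apply]
  refine (sum_mem fun y _ => ?_ : _ ∈ (alt0 : AddSubgroup (A Γ)))
  rw [map_smul, repr_T, Finsupp.smul_apply, smul_eq_mul, Finsupp.single_apply]
  split_ifs
  · rw [mul_one]; exact hh y
  · rw [mul_zero]; exact zero_mem alt0

theorem C_mul_T_sub_T_mem_Hlt0 {I : Set B} {w u : W} (hw : w ∈ d.cs.parabolic I)
    (hu : ∀ i ∈ I, ℓ (s i * u) = ℓ u + 1) : d.C w * d.T u - d.T (w * u) ∈ d.Hlt0 := by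
  have hTu : ∀ y ∈ d.cs.parabolic I, d.T y * d.T u = d.T (y * u) := fun y hy =>
    d.T_mul_T (length_mul_of_mem_parabolic_left hu hy)
  rw [← hTu w hw, ← sub_mul]
  have hCT : d.C w - d.T w ∈ d.Hlt0 := d.C_mod w
  refine d.mul_T_mem_Hlt0 hCT fun y hy => hTu y ?_
  rcases eq_or_ne y w with rfl | hyw
  · exact hw
  rw [Finsupp.mem_support_iff, map_sub, Finsupp.sub_apply, repr_T, Finsupp.single_eq_of_ne hyw,
    sub_zero, ← Finsupp.mem_support_iff] at hy
  exact (d.mem_parabolic_of_mem_support_repr_C hw hy hyw).1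

variable {c : Set W}

theorem ltc_of_leLstep (hc : d.IsTwoSidedCell c) {x z : W} (hz : d.ltc c z)
    (hxz : d.leLstep x z) : d.ltc c x := by
  have hle : d.leLR x z := .single (Or.inl hxz)
  refine ⟨fun hx => hz.1 ?_, fun y hy => hle.trans (hz.2 y hy)⟩
  obtain ⟨x0, rfl⟩ := hc
  exact ⟨hx.1.trans hle, (hz.2 x hx).trans hx.2⟩

theorem mem_Hltc_iff {h : H} : h ∈ d.Hltc c ↔ ↑(d.bC.repr h).support ⊆ {z | d.ltc c z} :=
  d.bC.mem_span_image

theorem mul_mem_Hltc (hc : d.IsTwoSidedCell c) (g : H) {h : H} (hh : h ∈ d.Hltc c) :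
    g * h ∈ d.Hltc c := by
  induction hh using Submodule.span_induction with
  | mem _ hx =>
    obtain ⟨z, hz, rfl⟩ := hx
    rw [← d.bC.sum_repr_smul g, Finset.sum_mul]
    refine sum_mem fun x _ => ?_
    rw [smul_mul_assoc]
    exact Submodule.smul_mem _ _ (d.mem_Hltc_iff.mpr fun y hy =>
      d.ltc_of_leLstep hc hz ⟨x, Finsupp.mem_support_iff.mp hy⟩)
  | zero => rw [mul_zero]; exact zero_mem _
  | add x y _ _ hx hy => rw [mul_add]; exact add_mem hx hy
  | smul a x _ hx => rw [mul_smul_comm]; exact Submodule.smul_mem _ _ hx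

theorem repr_C_eq_zero_of_mem_Hltc {h : H} (hh : h ∈ d.Hltc c) {z : W} (hz : z ∈ c) :
    d.bC.repr h z = 0 :=
  Finsupp.notMem_support_iff.mp fun hmem => (d.mem_Hltc_iff.mp hh hmem).1 hz

theorem mul_mem_span_C_sup_Hltc (hc : d.IsTwoSidedCell c) {w : W} {g x : H}
    (hg : g * d.C w ∈ (A Γ ∙ d.C w) ⊔ d.Hltc c) (hx : x ∈ (A Γ ∙ d.C w) ⊔ d.Hltc c) :
    g * x ∈ (A Γ ∙ d.C w) ⊔ d.Hltc c := by
  obtain ⟨a, hm⟩ := Submodule.mem_span_singleton_sup_iff.mp hx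
  rw [show g * x = a • (g * d.C w) + g * (x - a • d.C w) by rw [mul_sub, mul_smul_comm]; abel]
  exact add_mem (Submodule.smul_mem _ a hg) (Submodule.mem_sup_right (d.mul_mem_Hltc hc g hm))

theorem T_mul_C_mem_span_C_sup_Hltc (hc : d.IsTwoSidedCell c) {I : Set B} {w : W}
    (hT : ∀ i ∈ I, ∃ a : A Γ, d.T (s i) * d.C w - a • d.C w ∈ d.Hltc c) {y : W}
    (hy : y ∈ d.cs.parabolic I) : d.T y * d.C w ∈ (A Γ ∙ d.C w) ⊔ d.Hltc c := by
  obtain ⟨ω, hω, hωI, rfl⟩ := exists_isReduced_of_mem_parabolic hy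
  clear hy
  induction ω with
  | nil =>
    rw [wordProd_nil, T_one, one_mul]
    exact Submodule.mem_sup_left (Submodule.mem_span_singleton_self _)
  | cons i ω ih =>
    rw [wordProd_cons, ← d.T_mul_T (by rw [hω.length_simple_mul, length_simple, add_comm]),
      mul_assoc]
    exact d.mul_mem_span_C_sup_Hltc hc
      (Submodule.mem_span_singleton_sup_iff.mpr (hT i (hωI i List.mem_cons_self)))
      (ih hω.of_cons fun j hj => hωI j (List.mem_cons_of_mem i hj))

theorem C_mul_C_sub_hk_smul_mem_Hltc (hc : d.IsTwoSidedCell c) {I : Set B} {w : W}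
    (hwc : w ∈ c) (hw : w ∈ d.cs.parabolic I)
    (hT : ∀ i ∈ I, ∃ a : A Γ, d.T (s i) * d.C w - a • d.C w ∈ d.Hltc c) :
    d.C w * d.C w - d.hk w w w • d.C w ∈ d.Hltc c := by
  have hCC : d.C w * d.C w ∈ (A Γ ∙ d.C w) ⊔ d.Hltc c := by
    have hexp : d.C w * d.C w =
        ∑ y ∈ (d.bT.repr (d.C w)).support, d.bT.repr (d.C w) y • (d.T y * d.C w) := by
      simp_rw [← smul_mul_assoc, ← Finset.sum_mul]
      exact congrArg (· * d.C w) (d.bT.sum_repr_smul _).symm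
    rw [hexp]
    refine sum_mem fun y hy => ?_
    refine Submodule.smul_mem _ _ (d.T_mul_C_mem_span_C_sup_Hltc hc hT ?_)
    rcases eq_or_ne y w with rfl | hyw
    exacts [hw, (d.mem_parabolic_of_mem_support_repr_C hw hy hyw).1]
  obtain ⟨β, hβ⟩ := Submodule.mem_span_singleton_sup_iff.mp hCC
  have hβ_eq : d.hk w w w = β := by
    have := d.repr_C_eq_zero_of_mem_Hltc hβ hwc
    rw [map_sub, map_smul, Finsupp.sub_apply, Finsupp.smul_apply, repr_C, Finsupp.single_eq_same,
      smul_eq_mul, mul_one, sub_eq_zero] at this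
    exact this
  rwa [hβ_eq]

theorem bruhatLE_mul_simple {w : W} {i : B} (h : ℓ (w * s i) = ℓ w + 1) :
    d.bruhatLE w (w * s i) :=
  .single ⟨s i, d.cs.isReflection_simple i, rfl, by omega⟩

theorem bruhatLE_simple_mul {w : W} {i : B} (h : ℓ (s i * w) = ℓ w + 1) :
    d.bruhatLE w (s i * w) :=
  .single ⟨w⁻¹ * s i * w, by simpa using (d.cs.isReflection_simple i).conj w⁻¹, by group, by omega⟩

theorem bruhatLE_mul_wordProd (ω : List B) {x : W} (h : ℓ (x * π ω) = ℓ x + ω.length) :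
    d.bruhatLE x (x * π ω) := by
  induction ω generalizing x with
  | nil => rw [wordProd_nil, mul_one]; exact .refl
  | cons j ω ih =>
    rw [wordProd_cons, ← mul_assoc, List.length_cons] at h
    rw [wordProd_cons, ← mul_assoc]
    have h1 := d.cs.length_mul_le (x * s j) (π ω)
    have h2 := d.cs.length_wordProd_le ω
    have hxj : ℓ (x * s j) = ℓ x + 1 := by
      rcases d.cs.length_mul_simple x j with h3 | h3 <;> omega
    exact (d.bruhatLE_mul_simple hxj).trans (ih (by omega))

theorem simple_bruhatLE_of_mem {ω : List B} (hω : d.cs.IsReduced ω) {i : B} (hi : i ∈ ω) :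
    d.bruhatLE (s i) (π ω) := by
  induction ω with
  | nil => cases hi
  | cons j ω ih =>
    rw [wordProd_cons]
    rcases List.mem_cons.mp hi with rfl | hi
    · exact d.bruhatLE_mul_wordProd ω (by rw [hω.length_simple_mul, hω.of_cons, length_simple,
        add_comm])
    · exact (ih hω.of_cons hi).trans (d.bruhatLE_simple_mul hω.length_simple_mul)

theorem mem_parabolic_setOf_bruhatLE (w : W) : w ∈ d.cs.parabolic {i | d.bruhatLE (s i) w} := by
  obtain ⟨ω, hω, rfl⟩ := d.cs.exists_isReduced w
  exact wordProd_mem_parabolic fun i hi => d.simple_bruhatLE_of_mem hω hi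

end KL.KLData

/-- under Assumption (*), `C_d T_u ≡ T_{du} mod H_{<0}` for `u ∈ U_d`,
and `C_d C_d ≡ h_{d,d,d} C_d mod H_{<c}`. -/
theorem statement_1 {B W : Type} [Group W] {M : CoxeterMatrix B} {Γ : Type}
    [AddCommGroup Γ] [LinearOrder Γ] [IsOrderedAddMonoid Γ] {H : Type} [Ring H] [Algebra (A Γ) H]
    (d : KLData M W Γ H) (c : Set W) (cd : CellDecomp d c) :
    (∀ d0 ∈ cd.D, ∀ u ∈ cd.Ud d0, d.C d0 * d.T u - d.T (d0 * u) ∈ d.Hlt0) ∧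
    (∀ d0 ∈ cd.D, d.C d0 * d.C d0 - d.hk d0 d0 d0 • d.C d0 ∈ d.Hltc c) :=
  ⟨fun d0 hd0 u hu => d.C_mul_T_sub_T_mem_Hlt0 (d.mem_parabolic_setOf_bruhatLE d0)
      fun i hi => cd.s_len d0 hd0 i hi u hu,
    fun d0 hd0 => d.C_mul_C_sub_hk_smul_mem_Hltc cd.isCell (cd.D_sub hd0)
      (d.mem_parabolic_setOf_bruhatLE d0) (cd.TsC d0 hd0)⟩
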